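/- Let R be a commutative ring and let F(X,Y) ∈ R⟦X,Y⟧ be a one-dimensional commutative formal group law, i.e. F(X,0) = X, F(0,Y) = Y, F(X,Y) = F(Y,X), and F(F(X,Y),Z) = F(X,F(Y,Z)). Let ι(X) ∈ R⟦X⟧ be the formal inverse, the unique power series with zero constant term satisfying F(X, ι(X)) = 0. Then there exists a formal power series P(T) ∈ R⟦T⟧ with zero constant term such that X + ι(X) = P(X·ι(X)) holds in R⟦X⟧. -/

import Mathlib

open Finset

/-- Substitution of multivariate power series: `msubst F a` is the power series
`F(a)` obtained by substituting the series `a i` (which should have zero constant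
coefficient) for the `i`-th variable of `F`.  The `n`-th coefficient only involves
monomials of `F` of total degree at most `n`, which makes the following ad hoc
coefficientwise definition correct whenever every `a i` has zero constant
coefficient. -/
noncomputable def msubst {R : Type*} [CommRing R] {τ σ : Type*} [Fintype τ] [DecidableEq τ]
    (F : MvPowerSeries τ R) (a : τ → MvPowerSeries σ R) : MvPowerSeries σ R :=
  fun d => MvPowerSeries.coeff d
    (∑ e ∈ Finset.Iic (Finsupp.equivFunOnFinite.symm fun _ : τ => d.sum fun _ k => k),
      MvPowerSeries.coeff e F • ∏ i, a i ^ e i)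

/-- `F ∈ R⟦X,Y⟧` is a (one-dimensional, commutative) formal group law:
`F(X,0) = X`, `F(0,Y) = Y`, `F(X,Y) = F(Y,X)` and `F(F(X,Y),Z) = F(X,F(Y,Z))`. -/
def IsFormalGroupLaw {R : Type*} [CommRing R] (F : MvPowerSeries (Fin 2) R) : Prop :=
  msubst F ![PowerSeries.X, 0] = PowerSeries.X ∧
  msubst F ![0, PowerSeries.X] = PowerSeries.X ∧
  msubst F ![MvPowerSeries.X 1, MvPowerSeries.X 0] = F ∧
  msubst F ![msubst F ![(MvPowerSeries.X 0 : MvPowerSeries (Fin 3) R), MvPowerSeries.X 1],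
      MvPowerSeries.X 2] =
    msubst F ![(MvPowerSeries.X 0 : MvPowerSeries (Fin 3) R),
      msubst F ![MvPowerSeries.X 1, MvPowerSeries.X 2]]

/-!
A symmetric power series `F(X,Y)` is a power series `G(X+Y, XY)`: Weierstrass division of
`F(T, S-T)` by `T² - ST + E` over `R⟦S,E⟧` gives `F(T, S-T) ≡ a(S,E) + T·b(S,E)`, and since the
divisor vanishes at `T = X` and at `T = Y` (for `S = X+Y`, `E = XY`), symmetry of `F` yields
`(X - Y)·b(X+Y, XY) = 0`, so `F = a(X+Y, XY)`. As `F(X,0) = X`, also `G(S,0) = S`, so `G` is a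
Weierstrass divisor of degree one in `S` over `R⟦E⟧`, i.e. `S = G·q + P(E)`. Substituting
`S = X + ι(X)` and `E = X·ι(X)`, where `G` vanishes because `F(X, ι(X)) = 0`, leaves
`X + ι(X) = P(X·ι(X))`.
-/

open MvPowerSeries

namespace MvPowerSeries

variable {R : Type*} [CommRing R]

theorem coeff_prod_pow_eq_zero_of_degree_lt {σ τ : Type*} [Fintype τ] [DecidableEq τ]
    {a : τ → MvPowerSeries σ R} (ha : ∀ i, constantCoeff (a i) = 0) {e : τ → ℕ}
    {d : σ →₀ ℕ} {j : τ} (hj : d.degree < e j) : coeff d (∏ i, a i ^ e i) = 0 := by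
  apply coeff_of_lt_order
  calc (d.degree : ℕ∞) < e j := by exact_mod_cast hj
    _ ≤ (a j ^ e j).order := by
        simpa using le_order_pow_of_constantCoeff_eq_zero (e j) (ha j)
    _ ≤ _ := by
        rw [← Finset.mul_prod_erase _ _ (Finset.mem_univ j)]
        exact le_self_add.trans (le_order_mul ..)

theorem subst_rename {σ τ υ : Type*} {f : σ → τ} [Filter.TendstoCofinite f]
    {a : τ → MvPowerSeries υ R} (ha : HasSubst a) (p : MvPowerSeries σ R) :
    subst a (rename f p) = subst (a ∘ f) p := by
  rw [rename_eq_subst, subst_comp_subst_apply (HasSubst.X_comp f) ha]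
  congr 1
  ext1 i
  exact subst_X ha (f i)

section FinSucc

variable {n : ℕ}

theorem finSuccEquiv_rename_succ (p : MvPowerSeries (Fin n) R) :
    finSuccEquiv R n (rename Fin.succ p) = PowerSeries.C p := by
  ext k x
  rw [coeff_coeff_finSuccEquiv, PowerSeries.coeff_C]
  split_ifs with hk
  · have : Finsupp.cons k x = Finsupp.embDomain (Fin.succEmb n) x := by
      ext i
      cases i using Fin.cases with
      | zero => simp [hk, Finsupp.embDomain_of_notMem_range]
      | succ i => exact (Finsupp.embDomain_apply_self (Fin.succEmb n) x i).symm
    rw [this, ← coeff_embDomain_rename (Fin.succEmb n)]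
    rfl
  · rw [coeff_zero, coeff_rename_eq_zero]
    rintro ⟨y, hy⟩
    simpa [Finsupp.mapDomain_of_notMem_range, eq_comm, hk] using DFunLike.congr_fun hy 0

theorem subst_cons_X_zero_eq_map_constantCoeff (g : MvPowerSeries (Fin (n + 1)) R) :
    subst (Fin.cons PowerSeries.X 0) g = (finSuccEquiv R n g).map constantCoeff := by
  ext m
  have ha : HasSubst (Fin.cons PowerSeries.X 0 : Fin (n + 1) → PowerSeries R) :=
    hasSubst_of_constantCoeff_zero fun i => by
      cases i using Fin.cases
      · exact PowerSeries.constantCoeff_X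
      · rfl
  have hprod (d : Fin (n + 1) →₀ ℕ) :
      (d.prod fun i k => (Fin.cons PowerSeries.X 0 : Fin (n + 1) → PowerSeries R) i ^ k) =
        PowerSeries.X ^ d 0 * ∏ j : Fin n, 0 ^ d j.succ := by
    rw [Finsupp.prod_fintype _ _ (fun _ => pow_zero _), Fin.prod_univ_succ]
    rfl
  rw [PowerSeries.coeff_map, ← coeff_zero_eq_constantCoeff_apply, coeff_coeff_finSuccEquiv,
    PowerSeries.coeff, coeff_subst ha, finsum_eq_single _ (Finsupp.cons m 0)]
  · rw [hprod]
    simp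
  · intro d hd
    rw [hprod, smul_eq_mul, mul_eq_zero_of_right]
    by_cases htail : ∀ j : Fin n, d j.succ = 0
    · have hd0 : d 0 ≠ m := fun h => hd <| by
        ext i
        cases i using Fin.cases <;> simp [h, htail]
      simp only [htail, pow_zero, Finset.prod_const_one, mul_one]
      exact (PowerSeries.coeff_X_pow m (d 0)).trans (if_neg (Ne.symm hd0))
    · obtain ⟨j, hj⟩ := not_forall.mp htail
      rw [Finset.prod_eq_zero (Finset.mem_univ j) (zero_pow hj), mul_zero, map_zero]

theorem span_range_X_eq_ker_constantCoeff :
    Ideal.span (Set.range X) = RingHom.ker (constantCoeff : MvPowerSeries (Fin n) R →+* R) := by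
  refine le_antisymm (Ideal.span_le.mpr ?_) fun a ha => ?_
  · rintro _ ⟨i, rfl⟩
    simp
  induction n with
  | zero =>
    suffices a = 0 by simp [this]
    ext d
    rw [Subsingleton.elim d 0, coeff_zero_eq_constantCoeff_apply, map_zero]
    exact ha
  | succ n ih =>
    have hc : PowerSeries.constantCoeff (finSuccEquiv R n a) ∈ Ideal.span (Set.range X) := by
      refine ih _ ?_
      rw [RingHom.mem_ker, ← coeff_zero_eq_constantCoeff_apply,
        ← PowerSeries.coeff_zero_eq_constantCoeff_apply, coeff_coeff_finSuccEquiv,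
        Finsupp.cons_zero_zero, coeff_zero_eq_constantCoeff_apply]
      exact ha
    have hsucc : Set.range X ⊆ (Ideal.comap (rename Fin.succ : MvPowerSeries (Fin n) R →ₐ[R] _)
        (Ideal.span (Set.range X)) : Set (MvPowerSeries (Fin n) R)) := by
      rintro _ ⟨i, rfl⟩
      exact Ideal.subset_span ⟨i.succ, (rename_X _ i).symm⟩
    have hdecomp : a = X 0 * (finSuccEquiv R n).symm
        (PowerSeries.mk fun i => PowerSeries.coeff (i + 1) (finSuccEquiv R n a)) +
        rename Fin.succ (PowerSeries.constantCoeff (finSuccEquiv R n a)) := by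
      apply (finSuccEquiv R n).injective
      rw [map_add, map_mul, AlgEquiv.apply_symm_apply, finSuccEquiv_X_zero,
        finSuccEquiv_rename_succ]
      exact PowerSeries.eq_X_mul_shift_add_const _
    rw [hdecomp]
    exact Ideal.add_mem _ (Ideal.mul_mem_right _ _ (Ideal.subset_span ⟨0, rfl⟩))
      (Ideal.span_le.mpr hsucc hc)

/-- `PowerSeries.IsWeierstrassDivisorAt.isWeierstrassDivisionAt_div_mod` over `R⟦X 1, …, X n⟧`
at the ideal of its variables, transported along `finSuccEquiv`. -/
theorem exists_weierstrass_division {g : MvPowerSeries (Fin (n + 1)) R} {k : ℕ}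
    (hg : subst (Fin.cons PowerSeries.X 0 : Fin (n + 1) → PowerSeries R) g = PowerSeries.X ^ k)
    (f : MvPowerSeries (Fin (n + 1)) R) :
    ∃ (q : MvPowerSeries (Fin (n + 1)) R) (r : ℕ → MvPowerSeries (Fin n) R),
      f = g * q + ∑ i ∈ Finset.range k, X 0 ^ i * rename Fin.succ (r i) := by
  rcases subsingleton_or_nontrivial R with hR | hR
  · have : Subsingleton (MvPowerSeries (Fin (n + 1)) R) :=
      inferInstanceAs (Subsingleton ((Fin (n + 1) →₀ ℕ) → R))
    exact ⟨0, 0, Subsingleton.elim _ _⟩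
  set Φ := finSuccEquiv R n
  set I : Ideal (MvPowerSeries (Fin n) R) := Ideal.span (Set.range X) with hI
  have hmk (a : MvPowerSeries (Fin n) R) :
      Ideal.Quotient.mk I a = 0 ↔ constantCoeff a = 0 := by
    rw [Ideal.Quotient.eq_zero_iff_mem, hI, span_range_X_eq_ker_constantCoeff, RingHom.mem_ker]
  have hcoeff (i : ℕ) :
      constantCoeff (PowerSeries.coeff i (Φ g)) = if i = k then 1 else 0 := by
    rw [← PowerSeries.coeff_map, ← subst_cons_X_zero_eq_map_constantCoeff, hg,
      PowerSeries.coeff_X_pow]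
  have horder : ((Φ g).map (Ideal.Quotient.mk I)).order.toNat = k := by
    rw [PowerSeries.order_eq_nat.mpr]
    · rfl
    refine ⟨?_, fun i hi => ?_⟩
    · rw [PowerSeries.coeff_map, Ne, hmk, hcoeff, if_pos rfl]
      exact one_ne_zero
    · rw [PowerSeries.coeff_map, hmk, hcoeff, if_neg hi.ne]
  have hdiv : (Φ g).IsWeierstrassDivisorAt I := by
    rw [PowerSeries.IsWeierstrassDivisorAt, horder, isUnit_iff_constantCoeff, hcoeff, if_pos rfl]
    exact isUnit_one
  obtain ⟨hdeg, hΦf⟩ := hdiv.isWeierstrassDivisionAt_div_mod (Φ f)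
  rw [horder] at hdeg
  refine ⟨Φ.symm (hdiv.div (Φ f)), fun i => (hdiv.mod (Φ f)).coeff i,
    Φ.injective (hΦf.trans ?_)⟩
  rw [map_add, map_mul, AlgEquiv.apply_symm_apply, map_sum]
  congr 1
  ext j : 1
  simp only [map_mul, map_pow, Φ, finSuccEquiv_X_zero, finSuccEquiv_rename_succ,
    Polynomial.coeff_coe, map_sum, mul_comm (PowerSeries.X ^ _), PowerSeries.coeff_C_mul_X_pow,
    Finset.sum_ite_eq, Finset.mem_range]
  split_ifs with hj
  · rfl
  · exact Polynomial.coeff_eq_zero_of_degree_lt (hdeg.trans_le (by exact_mod_cast not_lt.mp hj))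

end FinSucc

theorem eq_zero_of_X_sub_X_mul_eq_zero {σ : Type*} {i j : σ} (hij : i ≠ j)
    {f : MvPowerSeries σ R} (h : (X i - X j) * f = 0) : f = 0 := by
  classical
  have hcoeff (d : σ →₀ ℕ) : coeff d f = coeff (d + Finsupp.single i 1) (X j * f) :=
    calc coeff d f = coeff (d + Finsupp.single i 1) (X i * f) := by
          rw [X_def, add_comm, coeff_add_monomial_mul, one_mul]
      _ = _ := by rw [← sub_eq_zero, ← map_sub, ← sub_mul, h, map_zero]
  suffices ∀ b, ∀ d : σ →₀ ℕ, d j = b → coeff d f = 0 from ext fun d => this _ d rfl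
  intro b
  induction b with
  | zero =>
    intro d hd
    rw [hcoeff, X_def, coeff_monomial_mul, if_neg]
    simp [Finsupp.single_le_iff, hd, hij.symm]
  | succ b ih =>
    intro d hd
    obtain ⟨d', rfl⟩ : ∃ d', d = d' + Finsupp.single j 1 :=
      ⟨d - Finsupp.single j 1, (tsub_add_cancel_of_le (by simp [Finsupp.single_le_iff, hd])).symm⟩
    rw [hcoeff, add_right_comm, X_def, add_comm, coeff_add_monomial_mul, one_mul]
    exact ih _ (by simpa [hij] using hd)

theorem exists_subst_add_mul_eq_of_symm {F : MvPowerSeries (Fin 2) R}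
    (hF : subst ![X 1, X 0] F = F) :
    ∃ G : MvPowerSeries (Fin 2) R, subst ![X 0 + X 1, X 0 * X 1] G = F := by
  -- the variables of `R⟦T, S, E⟧` are `X 0 = T`, `X 1 = S`, `X 2 = E`
  set w : MvPowerSeries (Fin 3) R := X 0 ^ 2 - X 1 * X 0 + X 2
  have hw : subst (Fin.cons PowerSeries.X 0 : Fin 3 → PowerSeries R) w = PowerSeries.X ^ 2 := by
    have h1 : finSuccEquiv R 2 (X 1) = PowerSeries.C (X 0) := finSuccEquiv_X_succ 0
    have h2 : finSuccEquiv R 2 (X 2) = PowerSeries.C (X 1) := finSuccEquiv_X_succ 1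
    simp [subst_cons_X_zero_eq_map_constantCoeff, w, h1, h2]
  obtain ⟨q, r, hdiv⟩ := exists_weierstrass_division hw (subst ![X 0, X 1 - X 0] F)
  set e : Fin 2 → MvPowerSeries (Fin 2) R := ![X 0 + X 1, X 0 * X 1]
  have heval (t : MvPowerSeries (Fin 2) R) (ht : constantCoeff t = 0) :
      subst ![t, X 0 + X 1 - t] F = (t ^ 2 - (X 0 + X 1) * t + X 0 * X 1) *
        subst ![t, X 0 + X 1, X 0 * X 1] q + subst e (r 0) + t * subst e (r 1) := by
    have ha : HasSubst ![t, X 0 + X 1, X 0 * X 1] :=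
      hasSubst_of_constantCoeff_zero fun i => by fin_cases i <;> simp [ht]
    have := congrArg (subst ![t, X 0 + X 1, X 0 * X 1]) hdiv
    rw [subst_comp_subst_apply (hasSubst_of_constantCoeff_zero fun i => by fin_cases i <;> simp)
      ha] at this
    simp only [Finset.sum_range_succ, Finset.range_one, Finset.sum_singleton, pow_zero, one_mul,
      pow_one, subst_add ha, subst_mul ha, subst_sub ha, subst_pow ha, subst_X ha,
      Matrix.cons_val_zero, Matrix.cons_val_one, subst_rename ha, w] at this
    have hF' : (fun s => subst ![t, X 0 + X 1, X 0 * X 1]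
        (![X 0, X 1 - X 0] s : MvPowerSeries (Fin 3) R)) = ![t, X 0 + X 1 - t] := by
      ext1 i; fin_cases i <;> simp [subst_X ha, subst_sub ha]
    have he : ![t, X 0 + X 1, X 0 * X 1] ∘ Fin.succ = e := by
      ext1 i; fin_cases i <;> rfl
    rwa [hF', he, ← add_assoc] at this
  have hX : ![X 0, X 1] = (X : Fin 2 → MvPowerSeries (Fin 2) R) := by
    ext1 i; fin_cases i <;> rfl
  have h0 := heval (X 0) (constantCoeff_X 0)
  have h1 := heval (X 1) (constantCoeff_X 1)
  rw [add_sub_cancel_left, hX, subst_self, id_eq] at h0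
  rw [add_sub_cancel_right, hF] at h1
  have hb : subst e (r 1) = 0 :=
    eq_zero_of_X_sub_X_mul_eq_zero (by decide : (0 : Fin 2) ≠ 1) (by linear_combination h1 - h0)
  exact ⟨r 0, by linear_combination -h0 - X 0 * hb⟩

theorem subst_subst_add_mul {σ : Type*} {a : Fin 2 → MvPowerSeries σ R} (ha : HasSubst a)
    (G : MvPowerSeries (Fin 2) R) :
    subst a (subst (![X 0 + X 1, X 0 * X 1] : Fin 2 → MvPowerSeries (Fin 2) R) G) =
      subst ![a 0 + a 1, a 0 * a 1] G := by
  rw [subst_comp_subst_apply (hasSubst_of_constantCoeff_zero fun i => by fin_cases i <;> simp) ha]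
  congr 1
  ext1 i
  fin_cases i <;> simp [subst_add ha, subst_mul ha, subst_X ha]

theorem exists_eq_subst_of_subst_eq_zero {σ : Type*} {G : MvPowerSeries (Fin 2) R}
    (hG : subst ![(PowerSeries.X : PowerSeries R), 0] G = PowerSeries.X)
    {s e : MvPowerSeries σ R} (hs : constantCoeff s = 0) (he : constantCoeff e = 0)
    (h : subst ![s, e] G = 0) :
    ∃ P : PowerSeries R, constantCoeff P = 0 ∧ s = subst (fun _ : Unit => e) P := by
  have hcons : (Fin.cons PowerSeries.X 0 : Fin 2 → PowerSeries R) = ![PowerSeries.X, 0] := by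
    ext1 i; fin_cases i <;> rfl
  have hG1 : subst (Fin.cons PowerSeries.X 0 : Fin 2 → PowerSeries R) G = PowerSeries.X ^ 1 := by
    rw [hcons, hG, pow_one]
  have hG0 : constantCoeff G = 0 := by
    have := congrArg (PowerSeries.coeff 0) hG1
    rwa [subst_cons_X_zero_eq_map_constantCoeff, PowerSeries.coeff_map,
      ← coeff_zero_eq_constantCoeff_apply, coeff_coeff_finSuccEquiv, Finsupp.cons_zero_zero,
      coeff_zero_eq_constantCoeff_apply, PowerSeries.coeff_X_pow, if_neg zero_ne_one] at this
  obtain ⟨q, r, hdiv⟩ := exists_weierstrass_division hG1 (X 0)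
  rw [Finset.sum_range_one, pow_zero, one_mul] at hdiv
  have ha : HasSubst ![s, e] := hasSubst_of_constantCoeff_zero fun i => by
    fin_cases i <;> assumption
  refine ⟨rename (fun _ => ()) (r 0), ?_, ?_⟩
  · have := congrArg constantCoeff hdiv
    rw [constantCoeff_X, map_add, map_mul, hG0, zero_mul, zero_add, constantCoeff_rename] at this
    rw [constantCoeff_rename, ← this]
  · have hsucc : ![s, e] ∘ Fin.succ = fun _ => e := by
      ext1 i; fin_cases i; rfl
    have := congrArg (subst ![s, e]) hdiv
    rw [subst_add ha, subst_mul ha, h, zero_mul, zero_add, subst_X ha, subst_rename ha,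
      hsucc] at this
    rw [subst_rename (hasSubst_of_constantCoeff_zero fun _ => he)]
    exact this

end MvPowerSeries

/-- Only exponents bounded by the total degree can contribute to a coefficient once the
substituted series have no constant term, so the truncated sum defining `msubst` is `subst`. -/
theorem msubst_eq_subst {R : Type*} [CommRing R] {σ τ : Type*} [Fintype τ] [DecidableEq τ]
    (F : MvPowerSeries τ R) {a : τ → MvPowerSeries σ R} (ha : ∀ i, constantCoeff (a i) = 0) :
    msubst F a = subst a F := by
  ext d
  have hprod (e : τ →₀ ℕ) : (e.prod fun i k => a i ^ k) = ∏ i, a i ^ e i :=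
    Finsupp.prod_fintype _ _ fun _ => pow_zero _
  rw [coeff_subst (hasSubst_of_constantCoeff_zero ha), finsum_eq_sum_of_support_subset _
    (s := Finset.Iic (Finsupp.equivFunOnFinite.symm fun _ : τ => d.degree)) ?_]
  · show coeff d (∑ e ∈ _, _) = _
    simp only [map_sum, map_smul, hprod]
    rfl
  · intro e he
    by_contra! hbox
    simp only [Finset.coe_Iic, Set.mem_Iic, Finsupp.le_def,
      Finsupp.equivFunOnFinite_symm_apply_apply, not_forall, not_le] at hbox
    obtain ⟨j, hj⟩ := hbox
    rw [Function.mem_support, hprod, coeff_prod_pow_eq_zero_of_degree_lt ha hj, smul_zero] at he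
    exact he rfl

/-- If `F` is a formal group law over `R` with formal inverse `ι` (the power series with zero
constant term satisfying `F(X, ι(X)) = 0`), then there is a power series `P` with zero
constant term such that `X + ι(X) = P(X · ι(X))`. -/
theorem fgl_add_inverse_eq_powerSeries_of_mul_inverse
    {R : Type*} [CommRing R] (F : MvPowerSeries (Fin 2) R) (hF : IsFormalGroupLaw F)
    (ι : PowerSeries R) (hι₀ : PowerSeries.constantCoeff ι = 0)
    (hι : msubst F ![PowerSeries.X, ι] = 0) :
    ∃ P : PowerSeries R, PowerSeries.constantCoeff P = 0 ∧
      PowerSeries.X + ι = msubst P (fun _ : Unit => PowerSeries.X * ι) := by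
  obtain ⟨hX0, -, hcomm, -⟩ := hF
  have hX : constantCoeff (PowerSeries.X : PowerSeries R) = 0 := PowerSeries.constantCoeff_X
  have hXι : ∀ i, constantCoeff ((![PowerSeries.X, ι] : Fin 2 → PowerSeries R) i) = 0 := by
    intro i; fin_cases i
    exacts [hX, hι₀]
  have hX0' : ∀ i, constantCoeff ((![PowerSeries.X, 0] : Fin 2 → PowerSeries R) i) = 0 := by
    intro i; fin_cases i
    exacts [hX, map_zero _]
  have hswap : ∀ i, constantCoeff ((![X 1, X 0] : Fin 2 → MvPowerSeries (Fin 2) R) i) = 0 := by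
    intro i; fin_cases i <;> exact constantCoeff_X _
  rw [msubst_eq_subst _ hX0'] at hX0
  rw [msubst_eq_subst _ hXι] at hι
  rw [msubst_eq_subst _ hswap] at hcomm
  obtain ⟨G, rfl⟩ := exists_subst_add_mul_eq_of_symm hcomm
  rw [subst_subst_add_mul (hasSubst_of_constantCoeff_zero hX0')] at hX0
  rw [subst_subst_add_mul (hasSubst_of_constantCoeff_zero hXι)] at hι
  simp only [Matrix.cons_val_zero, Matrix.cons_val_one, add_zero, mul_zero] at hX0 hι
  have hXι₀ : constantCoeff (PowerSeries.X * ι) = 0 := by rw [map_mul, hX, zero_mul]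
  obtain ⟨P, hP₀, hP⟩ := exists_eq_subst_of_subst_eq_zero hX0
    (by rw [map_add, hX, zero_add]; exact hι₀) hXι₀ hι
  exact ⟨P, hP₀, by rw [msubst_eq_subst _ fun _ => hXι₀]; exact hP⟩
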